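/- arXiv:2507.16985 — 4 statements merged into one kernel-verified Lean document; each statement's English description precedes it below -/
import Mathlib

section
/- For structures 𝔄 and 𝔅 with disjoint relational signatures, the automorphism group of the wreath product structure 𝔄 ≀ 𝔅 equals the wreath product Aut(𝔄) ≀ Aut(𝔅) of permutation groups. -/
/-!
A fiber-preserving permutation `e` of `A × B` moves whole fibers `A × {b}` onto fibers,
so it induces a permutation `β` of `B` (read off on any fixed first coordinate) and, on
each fiber, a permutation `α b` of `A`; then `e (a, b) = (α b a, β b)`. Testing the
relations of the wreath product on tuples inside one fiber shows that every `α b` is an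
automorphism of `𝔄`, and testing them on tuples of representatives shows that `β` is an
automorphism of `𝔅`. Conversely such a map visibly preserves fibers and both kinds of
relations.
-/

open Function Equiv

namespace WreathProduct

section Relations

variable {X : Type*} {ι : Type*} {ar : ι → ℕ}

def PreservesRels (R : ∀ r, (Fin (ar r) → X) → Prop) (σ : Perm X) : Prop :=
  ∀ r (t : Fin (ar r) → X), R r (fun j => σ (t j)) ↔ R r t

variable {A B : Type*}

def fiberLift (R : ∀ r, (Fin (ar r) → A) → Prop) (r : ι) (f : Fin (ar r) → A × B) : Prop :=
  (∀ j j', (f j).2 = (f j').2) ∧ R r (fun j => (f j).1)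

def baseLift (R : ∀ r, (Fin (ar r) → B) → Prop) (r : ι) (f : Fin (ar r) → A × B) : Prop :=
  R r (fun j => (f j).2)

end Relations

def PreservesFibers {A B : Type*} (e : Perm (A × B)) : Prop :=
  ∀ x y : A × B, x.2 = y.2 ↔ (e x).2 = (e y).2

section Decomposition

variable {A B : Type*} {e : Perm (A × B)}

theorem PreservesFibers.snd_apply_mk_eq (h : PreservesFibers e) (a a' : A) (b : B) :
    (e (a, b)).2 = (e (a', b)).2 :=
  (h _ _).1 rfl

theorem PreservesFibers.bijective_snd_apply_mk (h : PreservesFibers e) (a₀ : A) :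
    Bijective fun b => (e (a₀, b)).2 := by
  refine ⟨fun b b' hbb => (h (a₀, b) (a₀, b')).2 hbb, fun b' => ⟨(e.symm (a₀, b')).2, ?_⟩⟩
  calc (e (a₀, (e.symm (a₀, b')).2)).2
      = (e ((e.symm (a₀, b')).1, (e.symm (a₀, b')).2)).2 := h.snd_apply_mk_eq _ _ _
    _ = b' := by rw [Prod.mk.eta, apply_symm_apply]

theorem PreservesFibers.bijective_fst_apply_mk (h : PreservesFibers e) (b : B) :
    Bijective fun a => (e (a, b)).1 := by
  refine ⟨fun a a' haa => ?_, fun a => ?_⟩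
  · exact congrArg Prod.fst (e.injective (Prod.ext haa (h.snd_apply_mk_eq a a' b)))
  · -- `(e (a, b)).2` is the image of the fiber over `b`, so `p` lies in that fiber
    set p := e.symm (a, (e (a, b)).2)
    have hp : p.2 = b := (h p (a, b)).2 (by rw [apply_symm_apply])
    refine ⟨p.1, ?_⟩
    change (e (p.1, b)).1 = a
    rw [← hp, Prod.mk.eta, apply_symm_apply]

noncomputable def PreservesFibers.basePerm (h : PreservesFibers e) (a₀ : A) : Perm B :=
  Equiv.ofBijective _ (h.bijective_snd_apply_mk a₀)

noncomputable def PreservesFibers.fiberPerm (h : PreservesFibers e) (b : B) : Perm A :=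
  Equiv.ofBijective _ (h.bijective_fst_apply_mk b)

theorem PreservesFibers.apply_eq (h : PreservesFibers e) (a₀ : A) (x : A × B) :
    e x = (h.fiberPerm x.2 x.1, h.basePerm a₀ x.2) :=
  Prod.ext rfl (h.snd_apply_mk_eq x.1 a₀ x.2)

variable {ι : Type*} {ar : ι → ℕ}

theorem PreservesFibers.preservesRels_basePerm (h : PreservesFibers e) (a₀ : A)
    {R : ∀ r, (Fin (ar r) → B) → Prop} (hR : PreservesRels (baseLift R) e) :
    PreservesRels R (h.basePerm a₀) :=
  fun r t => hR r fun j => (a₀, t j)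

theorem PreservesFibers.preservesRels_fiberPerm (h : PreservesFibers e) (b : B)
    {R : ∀ r, (Fin (ar r) → A) → Prop} (hR : PreservesRels (fiberLift R) e) :
    PreservesRels R (h.fiberPerm b) := fun r t =>
  calc R r (fun j => h.fiberPerm b (t j))
      ↔ fiberLift R r (fun j => e (t j, b)) :=
        (and_iff_right fun _ _ => h.snd_apply_mk_eq _ _ b).symm
    _ ↔ fiberLift R r (fun j => (t j, b)) := hR r _
    _ ↔ R r t := and_iff_right fun _ _ => rfl

end Decomposition

section WreathElement

variable {A B : Type*} {e : Perm (A × B)} {β : Perm B} {α : B → Perm A}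

theorem preservesFibers_of_apply_eq (he : ∀ x, e x = (α x.2 x.1, β x.2)) :
    PreservesFibers e := by
  intro x y
  simp only [he, β.injective.eq_iff]

variable {ι : Type*} {ar : ι → ℕ}

theorem preservesRels_fiberLift_of_apply_eq {R : ∀ r, (Fin (ar r) → A) → Prop}
    (hα : ∀ b, PreservesRels R (α b)) (he : ∀ x, e x = (α x.2 x.1, β x.2)) :
    PreservesRels (fiberLift R) e := by
  intro r f
  simp only [fiberLift, he, β.injective.eq_iff]
  refine and_congr_right fun hf => ?_
  rcases isEmpty_or_nonempty (Fin (ar r)) with _ | ⟨⟨j₀⟩⟩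
  · rw [Subsingleton.elim (fun j => α (f j).2 (f j).1) fun j => (f j).1]
  · have hfiber : (fun j => α (f j).2 (f j).1) = fun j => α (f j₀).2 (f j).1 :=
      funext fun j => by rw [hf j j₀]
    rw [hfiber]
    exact hα _ r _

theorem preservesRels_baseLift_of_apply_eq {R : ∀ r, (Fin (ar r) → B) → Prop}
    (hβ : PreservesRels R β) (he : ∀ x, e x = (α x.2 x.1, β x.2)) :
    PreservesRels (baseLift R) e := by
  intro r f
  simp only [baseLift, he]
  exact hβ r _

end WreathElement

end WreathProduct

open WreathProduct in
/-- for structures `𝔄` (relations `RA`) and `𝔅` (relations `RB`) with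
disjoint relational signatures, a permutation `e` of `A × B` is an automorphism of the
wreath product structure `𝔄 ≀ 𝔅` (i.e. preserves the fiber equivalence `E`, the
relations of `𝔄` lifted to tuples within a single fiber, and the relations of `𝔅` on
second coordinates) if and only if it lies in the wreath product
`Aut(𝔄) ≀ Aut(𝔅)`, i.e. `e (a,b) = (α b a, β b)` for some `β ∈ Aut(𝔅)` and
automorphisms `α b ∈ Aut(𝔄)`. -/
theorem stmt_7 {A B : Type*} {ιA ιB : Type*}
    (arA : ιA → ℕ) (RA : ∀ r, (Fin (arA r) → A) → Prop)
    (arB : ιB → ℕ) (RB : ∀ s, (Fin (arB s) → B) → Prop)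
    (e : Equiv.Perm (A × B)) :
    ((∀ x y : A × B, x.2 = y.2 ↔ (e x).2 = (e y).2) ∧
      (∀ r (f : Fin (arA r) → A × B),
        ((∀ j j', (e (f j)).2 = (e (f j')).2) ∧ RA r (fun j => (e (f j)).1)) ↔
        ((∀ j j', (f j).2 = (f j').2) ∧ RA r (fun j => (f j).1))) ∧
      (∀ s (f : Fin (arB s) → A × B),
        RB s (fun j => (e (f j)).2) ↔ RB s (fun j => (f j).2)))
    ↔ ∃ β : Equiv.Perm B,
        (∀ s (t : Fin (arB s) → B), RB s (fun j => β (t j)) ↔ RB s t) ∧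
        ∃ α : B → Equiv.Perm A,
          (∀ b r (t : Fin (arA r) → A), RA r (fun j => α b (t j)) ↔ RA r t) ∧
          ∀ x : A × B, e x = (α x.2 x.1, β x.2) := by
  constructor
  · rintro ⟨hE, hA, hB⟩
    have hE : PreservesFibers e := hE
    rcases isEmpty_or_nonempty A with _ | ⟨⟨a₀⟩⟩
    · exact ⟨1, fun _ _ => Iff.rfl, fun _ => 1, fun _ _ _ => Iff.rfl, fun x => isEmptyElim x.1⟩
    · exact ⟨hE.basePerm a₀, hE.preservesRels_basePerm a₀ hB, hE.fiberPerm,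
        fun b => hE.preservesRels_fiberPerm b hA, hE.apply_eq a₀⟩
  · rintro ⟨β, hβ, α, hα, he⟩
    exact ⟨preservesFibers_of_apply_eq he, preservesRels_fiberLift_of_apply_eq hα he,
      preservesRels_baseLift_of_apply_eq hβ he⟩
end

section
/- Let (G, G*, π) be a finite cover of permutation groups. If G is closed, then G* is closed. -/
/-- The topology of pointwise convergence on `Sym(X)`. -/
def pointwiseTop (X : Type*) : TopologicalSpace (Equiv.Perm X) :=
  letI : TopologicalSpace X := ⊥
  TopologicalSpace.induced (fun e => (e : X → X)) inferInstance

/-!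
If `h` lies in the closure of `G*`, then on every finite `A ⊆ X` some `g ∈ G` lifts `h`, i.e.
`π ∘ g = h ∘ π` on `A`. The values `g a` are thereby confined to the finite fibres
`π⁻¹' {h (π a)}`, so compactness of their product yields one `f : X → X` with `π ∘ f = h ∘ π`
that agrees with an element of `G` on every finite set. Such an `f` is injective, and it is
surjective because elements of `G` carry a whole finite fibre onto a fibre. Hence `f` is a
permutation in the closure of `G`, so `f ∈ G`, and `f` lifts `h`, so `h ∈ G*`.
-/

open Filter Topology Function

theorem exists_mem_closure_forall_mem_of_isCompact {ι Z : Type*} [TopologicalSpace Z]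
    {K : ι → Set Z} (hK : ∀ i, IsCompact (K i)) {S : Set (ι → Z)}
    (hS : ∀ A : Finset ι, ∃ g ∈ S, ∀ i ∈ A, g i ∈ K i) :
    ∃ f ∈ closure S, ∀ i, f i ∈ K i := by
  have : NeBot (Filter.pi (fun i => 𝓟 (K i)) ⊓ 𝓟 S) := by
    refine inf_principal_neBot_iff.2 fun U hU => ?_
    obtain ⟨A, t, ht, hAt⟩ := mem_pi'.1 hU
    obtain ⟨g, hgS, hgK⟩ := hS A
    exact ⟨g, hAt fun i hi => mem_principal.1 (ht i) (hgK i hi), hgS⟩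
  obtain ⟨u, hu⟩ := exists_ultrafilter_le (Filter.pi (fun i => 𝓟 (K i)) ⊓ 𝓟 S)
  have hlim : ∀ i, ∃ z ∈ K i, ↑(u.map (· i)) ≤ 𝓝 z := fun i =>
    (hK i).ultrafilter_le_nhds _ ((le_pi.1 (hu.trans inf_le_left)) i)
  choose f hfK hf using hlim
  refine ⟨f, mem_closure_iff_ultrafilter.2 ⟨u, le_principal_iff.1 (hu.trans inf_le_right), ?_⟩, hfK⟩
  rw [nhds_pi]
  exact le_pi.2 hf

theorem mem_closure_iff_forall_finset_eq {ι Z : Type*} [TopologicalSpace Z] [DiscreteTopology Z]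
    {S : Set (ι → Z)} {f : ι → Z} :
    f ∈ closure S ↔ ∀ A : Finset ι, ∃ g ∈ S, ∀ i ∈ A, g i = f i := by
  rw [mem_closure_iff_nhds]
  constructor
  · intro hf A
    obtain ⟨g, hgA, hgS⟩ := hf _ (set_pi_mem_nhds A.finite_toSet fun i _ =>
      (isOpen_discrete {f i}).mem_nhds rfl)
    exact ⟨g, hgS, hgA⟩
  · intro hf U hU
    rw [nhds_pi] at hU
    obtain ⟨A, t, ht, hAt⟩ := mem_pi'.1 hU
    obtain ⟨g, hgS, hgf⟩ := hf A
    exact ⟨g, hAt fun i hi => hgf i hi ▸ mem_of_mem_nhds (ht i), hgS⟩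

theorem isClosed_pointwiseTop_iff {X : Type*} {S : Set (Equiv.Perm X)} :
    IsClosed[pointwiseTop X] S ↔
      ∀ f : Equiv.Perm X, (∀ A : Finset X, ∃ g ∈ S, ∀ a ∈ A, g a = f a) → f ∈ S := by
  let _ : TopologicalSpace X := ⊥
  have : DiscreteTopology X := ⟨rfl⟩
  rw [pointwiseTop, isClosed_induced_iff']
  simp only [mem_closure_iff_forall_finset_eq, Set.exists_mem_image]

theorem injective_of_forall_finset_eq_perm {X : Type*} {S : Set (Equiv.Perm X)} {f : X → X}
    (hf : ∀ A : Finset X, ∃ g ∈ S, ∀ a ∈ A, g a = f a) : Injective f := by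
  classical
  intro a b hab
  obtain ⟨g, -, hg⟩ := hf {a, b}
  exact g.injective <| by rw [hg a (by simp), hg b (by simp), hab]

section Cover

variable {X Y : Type*} {G : Subgroup (Equiv.Perm X)} {π : X → Y}

theorem surjective_of_forall_finset_eq_of_finite_fibers (hsurj : Surjective π)
    (hcong : ∀ g ∈ G, ∀ a b : X, π a = π b → π (g a) = π (g b))
    (hfib : ∀ y : Y, (π ⁻¹' {y}).Finite) {h : Equiv.Perm Y} {f : X → X}
    (hfπ : ∀ a, π (f a) = h (π a)) (hf : ∀ A : Finset X, ∃ g ∈ G, ∀ a ∈ A, g a = f a) :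
    Surjective f := by
  intro x
  set F := (hfib (h.symm (π x))).toFinset
  obtain ⟨a, ha⟩ := hsurj (h.symm (π x))
  obtain ⟨g, hgG, hg⟩ := hf F
  have haF : a ∈ F := by simp [F, ha]
  have hga : π (g a) = π x := by rw [hg a haF, hfπ, ha, Equiv.apply_symm_apply]
  have hgx : g⁻¹ x ∈ F := by
    have := hcong g⁻¹ (inv_mem hgG) _ _ hga
    simpa [F, ha] using this.symm
  exact ⟨g⁻¹ x, (hg _ hgx).symm.trans (g.apply_symm_apply x)⟩

theorem exists_mem_forall_apply_eq_of_forall_finset (hsurj : Surjective π)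
    (hcong : ∀ g ∈ G, ∀ a b : X, π a = π b → π (g a) = π (g b))
    (hfib : ∀ y : Y, (π ⁻¹' {y}).Finite) (hG : IsClosed[pointwiseTop X] (G : Set (Equiv.Perm X)))
    {h : Equiv.Perm Y} (hh : ∀ A : Finset X, ∃ g ∈ G, ∀ a ∈ A, π (g a) = h (π a)) :
    ∃ g ∈ G, ∀ a, π (g a) = h (π a) := by
  let _ : TopologicalSpace X := ⊥
  have : DiscreteTopology X := ⟨rfl⟩
  obtain ⟨f, hfG, hfπ⟩ := exists_mem_closure_forall_mem_of_isCompact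
    (K := fun a => π ⁻¹' {h (π a)}) (fun a => (hfib _).isCompact)
    (S := (⇑) '' (G : Set (Equiv.Perm X))) (by simpa using hh)
  simp only [mem_closure_iff_forall_finset_eq, Set.exists_mem_image, SetLike.mem_coe] at hfG
  have hbij : Bijective f := ⟨injective_of_forall_finset_eq_perm hfG,
    surjective_of_forall_finset_eq_of_finite_fibers hsurj hcong hfib hfπ hfG⟩
  exact ⟨Equiv.ofBijective f hbij, isClosed_pointwiseTop_iff.1 hG _ hfG, hfπ⟩

end Cover

/-- let `(G, G*, π)` be a finite cover of permutation groups: `π` is a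
surjection with finite fibers, the relation `π a = π b` is preserved by `G`, and the
induced homomorphism `μ_π` maps `G` onto `G*`. If `G` is closed then `G*` is closed. -/
theorem stmt_11 {X Xs : Type*} (G : Subgroup (Equiv.Perm X)) (Gs : Subgroup (Equiv.Perm Xs))
    (π : X → Xs) (hsurj : Function.Surjective π)
    (hcong : ∀ g ∈ G, ∀ a b : X, π a = π b → π (g a) = π (g b))
    (himg : ∀ h : Equiv.Perm Xs, h ∈ Gs ↔ ∃ g ∈ G, ∀ a : X, h (π a) = π (g a))
    (hfib : ∀ w : Xs, (π ⁻¹' {w}).Finite)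
    (hGclosed : @IsClosed _ (pointwiseTop X) (G : Set (Equiv.Perm X))) :
    @IsClosed _ (pointwiseTop Xs) (Gs : Set (Equiv.Perm Xs)) := by
  classical
  refine isClosed_pointwiseTop_iff.2 fun h hh => (himg h).2 ?_
  have hlift : ∀ A : Finset X, ∃ g ∈ G, ∀ a ∈ A, π (g a) = h (π a) := by
    intro A
    obtain ⟨h', hh', hh'h⟩ := hh (A.image π)
    obtain ⟨g, hgG, hg⟩ := (himg h').1 hh'
    exact ⟨g, hgG, fun a ha => (hg a).symm.trans (hh'h _ (Finset.mem_image_of_mem π ha))⟩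
  obtain ⟨g, hgG, hg⟩ := exists_mem_forall_apply_eq_of_forall_finset hsurj hcong hfib hGclosed hlift
  exact ⟨g, hgG, fun a => (hg a).symm⟩
end

section
/- Let G be a closed permutation group and (A,B) a partition of its domain into G-invariant subsets. Suppose that for every finite subset T ⊆ B the closure of (G_T)|_A equals the closure of G|_A. Then (G_B)|_A = G|_A and G|_A is closed, where G_B is the pointwise stabilizer of B. -/
/-- The restriction of a set `S` of permutations of `X` to an (invariant) subset `A`:
the permutations of `A` which agree with some member of `S` on `A`. -/
def restrictSet {X : Type*} (A : Set X) (S : Set (Equiv.Perm X)) : Set (Equiv.Perm A) :=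
  {e | ∃ g ∈ S, ∀ a : A, (e a : X) = g (a : X)}

/-!
Let `e` be a limit of restrictions `g|_A`, `g ∈ G`, and let `ê` be the permutation of `X` that is
`e` on `A` and the identity on `B`. A finite `F ⊆ X` splits into `F ∩ A` and `T = F ∩ B`, and by
hypothesis `e` is also a limit of restrictions of elements of `G_T`; one of them agrees with `ê` on
all of `F`. Hence `ê` lies in the closure of `G`, so in `G`, and fixes `B`: every point of the
closure of `G|_A` is already in `(G_B)|_A ⊆ G|_A`.
-/

open Equiv

section PointwiseConvergence

attribute [local instance] pointwiseTop

theorem mem_closure_pointwiseTop_iff {Y : Type*} {S : Set (Perm Y)} {e : Perm Y} :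
    e ∈ closure S ↔ ∀ F : Finset Y, ∃ g ∈ S, ∀ y ∈ F, e y = g y := by
  let _ : TopologicalSpace Y := ⊥
  have : DiscreteTopology Y := ⟨rfl⟩
  rw [mem_closure_iff]
  constructor
  · intro h F
    have hopen : IsOpen {f : Perm Y | ∀ y ∈ F, f y = e y} := by
      have hfix : IsOpen {f : Y → Y | ∀ y ∈ F, f y = e y} := by
        convert F.finite_toSet.isOpen_biInter fun y _ =>
          (isOpen_discrete {e y}).preimage (continuous_apply y) using 1
        ext; simp
      exact hfix.preimage continuous_induced_dom
    obtain ⟨g, hgF, hgS⟩ := h _ hopen fun y _ => rfl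
    exact ⟨g, hgS, fun y hy => (hgF y hy).symm⟩
  · intro h o ho heo
    obtain ⟨V, hV, rfl⟩ := isOpen_induced_iff.mp ho
    obtain ⟨I, u, hu, hsub⟩ := isOpen_pi_iff.mp hV _ heo
    obtain ⟨g, hgS, hg⟩ := h I
    refine ⟨g, hsub fun i hi => ?_, hgS⟩
    simpa [← hg i hi] using (hu i hi).2

variable {X : Type*} {A : Set X}

theorem restrictSet_mono {S S' : Set (Perm X)} (h : S ⊆ S') : restrictSet A S ⊆ restrictSet A S' :=
  fun _ ⟨g, hg, hge⟩ => ⟨g, h hg, hge⟩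

theorem mem_restrictSet_of_ofSubtype_mem [DecidablePred (· ∈ A)] {S : Set (Perm X)}
    {e : Perm A} (h : Perm.ofSubtype e ∈ S) : e ∈ restrictSet A S :=
  ⟨_, h, fun a => (Perm.ofSubtype_apply_coe e a).symm⟩

theorem ofSubtype_mem_closure [DecidablePred (· ∈ A)] {S : Set (Perm X)} {e : Perm A}
    (he : ∀ T : Finset X, ↑T ⊆ Aᶜ →
      e ∈ closure (restrictSet A {g | g ∈ S ∧ ∀ t ∈ T, g t = t})) :
    Perm.ofSubtype e ∈ closure S := by
  refine mem_closure_pointwiseTop_iff.mpr fun F => ?_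
  classical
  obtain ⟨f, ⟨g, ⟨hgS, hgT⟩, hfg⟩, hef⟩ :=
    mem_closure_pointwiseTop_iff.mp (he (F.filter (· ∉ A)) fun x hx => (Finset.mem_filter.mp hx).2)
      (F.subtype (· ∈ A))
  refine ⟨g, hgS, fun x hxF => ?_⟩
  by_cases hx : x ∈ A
  · rw [Perm.ofSubtype_apply_of_mem e hx, hef _ (Finset.mem_subtype.mpr hxF), hfg]
  · rw [Perm.ofSubtype_apply_of_not_mem e hx, hgT x (Finset.mem_filter.mpr ⟨hxF, hx⟩)]

theorem closure_restrictSet_subset_restrictSet_fixing_compl {S : Set (Perm X)}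
    (hS : IsClosed S)
    (h : ∀ T : Finset X, ↑T ⊆ Aᶜ →
      closure (restrictSet A {g | g ∈ S ∧ ∀ t ∈ T, g t = t}) = closure (restrictSet A S)) :
    closure (restrictSet A S) ⊆ restrictSet A {g | g ∈ S ∧ ∀ b ∈ Aᶜ, g b = b} := by
  classical
  intro e he
  refine mem_restrictSet_of_ofSubtype_mem ⟨?_, fun b hb => Perm.ofSubtype_apply_of_not_mem e hb⟩
  exact hS.closure_subset (ofSubtype_mem_closure fun T hT => h T hT ▸ he)

end PointwiseConvergence

theorem stmt_12_general {X : Type*} (G : Subgroup (Equiv.Perm X))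
    (hGclosed : @IsClosed _ (pointwiseTop X) (G : Set (Equiv.Perm X)))
    (A B : Set X) (hunion : A ∪ B = Set.univ) (hdisj : A ∩ B = ∅)
    (hyp : ∀ T : Finset X, ↑T ⊆ B →
      @closure _ (pointwiseTop A)
          (restrictSet A {g : Equiv.Perm X | g ∈ G ∧ ∀ t ∈ T, g t = t}) =
        @closure _ (pointwiseTop A) (restrictSet A (G : Set (Equiv.Perm X)))) :
    restrictSet A {g : Equiv.Perm X | g ∈ G ∧ ∀ b ∈ B, g b = b} =
        restrictSet A (G : Set (Equiv.Perm X)) ∧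
      @IsClosed _ (pointwiseTop A) (restrictSet A (G : Set (Equiv.Perm X))) := by
  let _ := pointwiseTop A
  obtain rfl : B = Aᶜ := (IsCompl.of_eq hdisj hunion).compl_eq.symm
  have hcl := closure_restrictSet_subset_restrictSet_fixing_compl hGclosed hyp
  have hfix : restrictSet A {g | g ∈ G ∧ ∀ b ∈ Aᶜ, g b = b} ⊆ restrictSet A G :=
    restrictSet_mono fun _ hg => hg.1
  exact ⟨hfix.antisymm (subset_closure.trans hcl), closure_subset_iff_isClosed.mp (hcl.trans hfix)⟩

/-- let `G` be a closed permutation group and `(A, B)` a partition of its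
domain into `G`-invariant subsets. If for every finite `T ⊆ B` the closure of
`(G_T)|_A` equals the closure of `G|_A`, then `(G_B)|_A = G|_A` and `G|_A` is closed. -/
theorem stmt_12 {X : Type*} (G : Subgroup (Equiv.Perm X))
    (hGclosed : @IsClosed _ (pointwiseTop X) (G : Set (Equiv.Perm X)))
    (A B : Set X) (hunion : A ∪ B = Set.univ) (hdisj : A ∩ B = ∅)
    (hAinv : ∀ g ∈ G, ∀ x ∈ A, g x ∈ A) (hBinv : ∀ g ∈ G, ∀ x ∈ B, g x ∈ B)
    (hyp : ∀ T : Finset X, ↑T ⊆ B →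
      @closure _ (pointwiseTop A)
          (restrictSet A {g : Equiv.Perm X | g ∈ G ∧ ∀ t ∈ T, g t = t}) =
        @closure _ (pointwiseTop A) (restrictSet A (G : Set (Equiv.Perm X)))) :
    restrictSet A {g : Equiv.Perm X | g ∈ G ∧ ∀ b ∈ B, g b = b} =
        restrictSet A (G : Set (Equiv.Perm X)) ∧
      @IsClosed _ (pointwiseTop A) (restrictSet A (G : Set (Equiv.Perm X))) :=
  stmt_12_general G hGclosed A B hunion hdisj hyp
end

section
/- Let H ≤ G be permutation groups with |G : H| = d < ∞, and suppose H is m-sensitive for some m ≥ 2. Then G is dm-sensitive. -/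
/-!
Fix representatives `r₁, …, r_d` of the left cosets of `H` in `G`. If `u` and `v` lie in
different `G`-orbits, then for every `k` the tuples `u` and `r_k⁻¹ v` lie in different
`H`-orbits, so `m`-sensitivity of `H` gives an index map `p_k : Fin m → Fin n` separating
them. Concatenating the `p_k` gives a map `Fin (d * m) → Fin n`: if some `g ∈ G` matched
`u` and `v` along it, then writing `g ∈ r_k H` the element `r_k⁻¹ g ∈ H` would match `u` and
`r_k⁻¹ v` along `p_k`.
-/

/-- A permutation group `G ≤ Sym(A)` is `m`-sensitive if whenever two `n`-tuples lie in
different `G`-orbits, some `m`-subtuple (given by an index map `p : Fin m → Fin n`)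
already lies in different `G`-orbits. -/
def MSensitive {A : Type*} (G : Subgroup (Equiv.Perm A)) (m : ℕ) : Prop :=
  ∀ (n : ℕ) (u v : Fin n → A), (¬ ∃ g ∈ G, ∀ i, g (u i) = v i) →
    ∃ p : Fin m → Fin n, ¬ ∃ g ∈ G, ∀ i, g (u (p i)) = v (p i)

open Equiv

theorem Subgroup.exists_fin_inv_mul_mem_of_index_eq {G : Type*} [Group G] (K : Subgroup G) {d : ℕ}
    (hd : K.index = d) (hdpos : 0 < d) : ∃ r : Fin d → G, ∀ g, ∃ k, (r k)⁻¹ * g ∈ K := by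
  have : Finite (G ⧸ K) := Nat.finite_of_card_ne_zero (by rw [← Subgroup.index]; omega)
  let e : (G ⧸ K) ≃ Fin d := Finite.equivFinOfCardEq hd
  refine ⟨fun k => (e.symm k).out, fun g => ⟨e (g : G ⧸ K), QuotientGroup.eq.mp ?_⟩⟩
  show ((e.symm (e g)).out : G ⧸ K) = g
  rw [Equiv.symm_apply_apply, QuotientGroup.out_eq']

namespace MSensitive

variable {A ι : Type*} {G H : Subgroup (Perm A)}

theorem not_exists_apply_eq_inv_apply (hHG : H ≤ G) {u v : ι → A}
    (huv : ¬ ∃ g ∈ G, ∀ i, g (u i) = v i) {r : Perm A} (hr : r ∈ G) :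
    ¬ ∃ h ∈ H, ∀ i, h (u i) = r⁻¹ (v i) := by
  rintro ⟨h, hh, hhv⟩
  refine huv ⟨r * h, mul_mem hr (hHG hh), fun i => ?_⟩
  rw [Perm.mul_apply, hhv i]
  exact r.apply_symm_apply _

theorem of_cover_by_cosets (hHG : H ≤ G) {d m : ℕ} (r : Fin d → Perm A) (hr : ∀ k, r k ∈ G)
    (hcover : ∀ g ∈ G, ∃ k, (r k)⁻¹ * g ∈ H) (hH : MSensitive H m) :
    MSensitive G (d * m) := by
  intro n u v huv
  choose p hp using fun k => hH n u (fun i => (r k)⁻¹ (v i))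
    (not_exists_apply_eq_inv_apply hHG huv (hr k))
  refine ⟨fun i => p (finProdFinEquiv.symm i).1 (finProdFinEquiv.symm i).2, ?_⟩
  rintro ⟨g, hg, hgv⟩
  obtain ⟨k, hk⟩ := hcover g hg
  refine hp k ⟨(r k)⁻¹ * g, hk, fun j => ?_⟩
  have hkj := hgv (finProdFinEquiv (k, j))
  simp only [Equiv.symm_apply_apply] at hkj
  rw [Perm.mul_apply, hkj]

end MSensitive

theorem stmt_16_general {A : Type*} (G H : Subgroup (Equiv.Perm A)) (hHG : H ≤ G)
    (d m : ℕ) (hd : (H.subgroupOf G).index = d) (hdpos : 0 < d)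
    (hH : MSensitive H m) : MSensitive G (d * m) := by
  obtain ⟨r, hr⟩ := (H.subgroupOf G).exists_fin_inv_mul_mem_of_index_eq hd hdpos
  refine MSensitive.of_cover_by_cosets hHG (fun k => r k) (fun k => (r k).2) ?_ hH
  intro g hg
  obtain ⟨k, hk⟩ := hr ⟨g, hg⟩
  exact ⟨k, Subgroup.mem_subgroupOf.mp hk⟩

/-- if `H ≤ G` are permutation groups with `|G : H| = d` finite, and `H`
is `m`-sensitive for some `m ≥ 2`, then `G` is `dm`-sensitive. -/
theorem stmt_16 {A : Type*} (G H : Subgroup (Equiv.Perm A)) (hHG : H ≤ G)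
    (d m : ℕ) (hd : (H.subgroupOf G).index = d) (hdpos : 0 < d) (hm : 2 ≤ m)
    (hH : MSensitive H m) : MSensitive G (d * m) :=
  stmt_16_general G H hHG d m hd hdpos hH
end
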